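/- The generating function of RNA secondary structures satisfies S(z) = (1 − z + z^2 − √((z^2 + z + 1)(z^2 − 3z + 1)))/(2 z^2); equivalently, S(z) satisfies the algebraic equation z^2 S(z)^2 − (1 − z + z^2) S(z) + 1 = 0, with S(0) = 1. -/

import Mathlib

open Finset Filter Topology Asymptotics

/-- An RNA secondary structure of length `n`: a set of arcs `(i,j)`, `1 ≤ i < j ≤ n`,
which form a partial matching (no shared endpoints), are noncrossing, and contain
no 1-arc `(i,i+1)`. -/
def IsSecStr (n : ℕ) (A : Finset (ℕ × ℕ)) : Prop :=
  (∀ p ∈ A, 1 ≤ p.1 ∧ p.1 < p.2 ∧ p.2 ≤ n ∧ p.2 ≠ p.1 + 1) ∧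
  (∀ p ∈ A, ∀ q ∈ A, p ≠ q →
    p.1 ≠ q.1 ∧ p.1 ≠ q.2 ∧ p.2 ≠ q.1 ∧ p.2 ≠ q.2) ∧
  (∀ p ∈ A, ∀ q ∈ A, ¬ (p.1 < q.1 ∧ q.1 < p.2 ∧ p.2 < q.2))

/-- `s(n)`: the number of RNA secondary structures of length `n`. -/
noncomputable def secCount (n : ℕ) : ℕ :=
  Nat.card {A : Finset (ℕ × ℕ) // IsSecStr n A}

/-- The diagram graph of a secondary structure: backbone edges `(i,i+1)` together
with the arcs, on vertices `1,…,n`. -/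
def diagGraph (n : ℕ) (A : Finset (ℕ × ℕ)) : SimpleGraph ℕ where
  Adj i j := i ≠ j ∧ 1 ≤ i ∧ i ≤ n ∧ 1 ≤ j ∧ j ≤ n ∧
    (j = i + 1 ∨ i = j + 1 ∨ (i, j) ∈ A ∨ (j, i) ∈ A)
  symm := ⟨by
    rintro i j ⟨h1, h2, h3, h4, h5, h6⟩
    exact ⟨h1.symm, h4, h5, h2, h3, by tauto⟩⟩
  loopless := ⟨by rintro i ⟨h1, _⟩; exact h1 rfl⟩

/-- The 5'-3' distance of a secondary structure: the graph distance from
vertex `1` to vertex `n` in its diagram. -/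
noncomputable def secDist (n : ℕ) (A : Finset (ℕ × ℕ)) : ℕ :=
  (diagGraph n A).dist 1 n

/-- `w(n,d)`: the number of secondary structures of length `n` with 5'-3' distance `d`. -/
noncomputable def wCount (n d : ℕ) : ℕ :=
  Nat.card {A : Finset (ℕ × ℕ) // IsSecStr n A ∧ secDist n A = d}

/-- The dominant singularity `ρ = (3 − √5)/2`. -/
noncomputable def rho : ℝ := (3 - Real.sqrt 5) / 2

/-- The generating function of RNA secondary structures, in closed form. -/
noncomputable def Sfun (z : ℝ) : ℝ :=
  (1 - z + z ^ 2 - Real.sqrt ((z ^ 2 + z + 1) * (z ^ 2 - 3 * z + 1))) / (2 * z ^ 2)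

/-- The bivariate generating function `W(z,u)`, in closed form. -/
noncomputable def Wfun (z u : ℝ) : ℝ :=
  u * z ^ 2 * (Sfun z - 1) /
    ((1 - z * u) ^ 2 - (1 - z * u) * (z * u) ^ 2 * (Sfun z - 1)) + z / (1 - z * u)

/-- `cov A j`: the number of arcs of `A` covering the gap between vertices `j` and `j+1`
(equivalently, the size of the shape of the associated 1-tableau at that gap). -/
def cov (A : Finset (ℕ × ℕ)) (j : ℕ) : ℕ :=
  (A.filter (fun p => p.1 ≤ j ∧ j < p.2)).card

/-- An irreducible secondary structure: the associated tableau never returns to the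
empty shape strictly between the two ends, i.e. every interior gap is covered by an arc. -/
def IsIrr (n : ℕ) (A : Finset (ℕ × ℕ)) : Prop :=
  IsSecStr n A ∧ 2 ≤ n ∧ ∀ j, 1 ≤ j → j ≤ n - 1 → 1 ≤ cov A j

/-- `i(n)`: the number of irreducible secondary structures of length `n`. -/
noncomputable def irrCount (n : ℕ) : ℕ :=
  Nat.card {A : Finset (ℕ × ℕ) // IsIrr n A}

/-!
A secondary structure on `n + 1` points either leaves `n + 1` unpaired or pairs it with some
`k + 1 ≤ n - 1`; that arc separates the remaining arcs into independent structures on `[1, k]`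
and `[k + 2, n]`, which is Waterman's recursion. For `0 < z < ρ` the weighted partial sums
`P_N = ∑_{n < N} s(n) zⁿ` satisfy `P_{N+1} ≤ 1 + z P_N + z² P_N (P_N - 1)`, so they stay below
the smaller root `S(z)` of `z² X² - (1 - z + z²) X + 1 = 0`. The series therefore converges, its
sum is a root of the same equation by the Cauchy product formula, and being at most `S(z)` it is
`S(z)`.
-/

namespace IsSecStr

variable {n m : ℕ} {A B : Finset (ℕ × ℕ)}

theorem of_subset (hA : IsSecStr n A) (hBA : B ⊆ A) (hB : ∀ p ∈ B, p.2 ≤ m) :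
    IsSecStr m B :=
  ⟨fun p hp => ⟨(hA.1 p (hBA hp)).1, (hA.1 p (hBA hp)).2.1, hB p hp, (hA.1 p (hBA hp)).2.2.2⟩,
    fun p hp q hq => hA.2.1 p (hBA hp) q (hBA hq),
    fun p hp q hq => hA.2.2 p (hBA hp) q (hBA hq)⟩

theorem mono (hA : IsSecStr m A) (hmn : m ≤ n) : IsSecStr n A :=
  hA.of_subset subset_rfl fun p hp => (hA.1 p hp).2.2.1.trans hmn

theorem disjoint_or_nested (hA : IsSecStr n A) {p q : ℕ × ℕ} (hp : p ∈ A) (hq : q ∈ A)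
    (hpq : p ≠ q) :
    p.2 < q.1 ∨ q.2 < p.1 ∨ (q.1 < p.1 ∧ p.2 < q.2) ∨ (p.1 < q.1 ∧ q.2 < p.2) := by
  have := hA.1 p hp
  have := hA.1 q hq
  have := hA.2.1 p hp q hq hpq
  have := hA.2.2 p hp q hq
  have := hA.2.2 q hq p hp
  omega

theorem union (hA : IsSecStr n A) (hB : IsSecStr n B) (hAB : ∀ p ∈ A, ∀ q ∈ B, p.2 < q.1) :
    IsSecStr n (A ∪ B) := by
  refine ⟨fun p hp => (mem_union.1 hp).elim (hA.1 p) (hB.1 p), fun p hp q hq hpq => ?_,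
    fun p hp q hq => ?_⟩
  · rcases mem_union.1 hp with hp | hp <;> rcases mem_union.1 hq with hq | hq
    · exact hA.2.1 p hp q hq hpq
    · have := hAB p hp q hq; have := hA.1 p hp; have := hB.1 q hq; omega
    · have := hAB q hq p hp; have := hA.1 q hq; have := hB.1 p hp; omega
    · exact hB.2.1 p hp q hq hpq
  · rcases mem_union.1 hp with hp | hp <;> rcases mem_union.1 hq with hq | hq
    · exact hA.2.2 p hp q hq
    · have := hAB p hp q hq; omega
    · have := hAB q hq p hp; have := hB.1 p hp; omega
    · exact hB.2.2 p hp q hq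

theorem insert_arc {i j : ℕ} (hA : IsSecStr n A) (hi : 1 ≤ i) (hij : i + 1 < j) (hj : j ≤ n)
    (hcompat : ∀ p ∈ A, p.2 < i ∨ j < p.1 ∨ (i < p.1 ∧ p.2 < j) ∨ (p.1 < i ∧ j < p.2)) :
    IsSecStr n (insert (i, j) A) := by
  refine ⟨?_, fun p hp q hq hpq => ?_, fun p hp q hq => ?_⟩
  · intro p hp
    rcases Finset.mem_insert.1 hp with rfl | hp
    · dsimp only; omega
    · exact hA.1 p hp
  · rcases Finset.mem_insert.1 hp with rfl | hp <;> rcases Finset.mem_insert.1 hq with rfl | hq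
    · exact absurd rfl hpq
    · have := hcompat q hq; have := hA.1 q hq; dsimp only; omega
    · have := hcompat p hp; have := hA.1 p hp; dsimp only; omega
    · exact hA.2.1 p hp q hq hpq
  · rcases Finset.mem_insert.1 hp with rfl | hp <;> rcases Finset.mem_insert.1 hq with rfl | hq
    · dsimp only; omega
    · have := hcompat q hq; have := hA.1 q hq; dsimp only; omega
    · have := hcompat p hp; have := hA.1 p hp; dsimp only; omega
    · exact hA.2.2 p hp q hq

end IsSecStr

def shiftArcs (j : ℕ) (A : Finset (ℕ × ℕ)) : Finset (ℕ × ℕ) :=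
  A.image (Prod.map (· + j) (· + j))

def unshiftArcs (j : ℕ) (A : Finset (ℕ × ℕ)) : Finset (ℕ × ℕ) :=
  A.image (Prod.map (· - j) (· - j))

section Shift

variable {n j : ℕ} {A : Finset (ℕ × ℕ)}

theorem unshiftArcs_shiftArcs : unshiftArcs j (shiftArcs j A) = A := by
  rw [unshiftArcs, shiftArcs, image_image]
  conv_rhs => rw [← image_id (s := A)]
  exact image_congr fun p _ => by ext <;> simp

theorem shiftArcs_unshiftArcs (h : ∀ p ∈ A, j ≤ p.1 ∧ j ≤ p.2) :
    shiftArcs j (unshiftArcs j A) = A := by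
  rw [shiftArcs, unshiftArcs, image_image, Prod.map_comp_map]
  conv_rhs => rw [← image_id (s := A)]
  refine image_congr fun p hp => ?_
  have := h p hp
  ext <;> simp <;> omega

theorem IsSecStr.shiftArcs (hA : IsSecStr n A) : IsSecStr (n + j) (shiftArcs j A) := by
  refine ⟨?_, ?_, ?_⟩ <;>
    simp only [_root_.shiftArcs, forall_mem_image, Prod.map_fst, Prod.map_snd]
  · intro p hp; have := hA.1 p hp; omega
  · intro p hp q hq hpq
    have := hA.2.1 p hp q hq (fun h => hpq (h ▸ rfl)); omega
  · intro p hp q hq; have := hA.2.2 p hp q hq; omega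

theorem IsSecStr.lt_fst_of_mem_shiftArcs (hA : IsSecStr n A) {q : ℕ × ℕ}
    (hq : q ∈ _root_.shiftArcs j A) : j < q.1 := by
  obtain ⟨p, hp, rfl⟩ := mem_image.1 hq
  have := hA.1 p hp
  simp only [Prod.map_fst]
  omega

theorem IsSecStr.unshiftArcs (hA : IsSecStr n A) (hj : ∀ p ∈ A, j < p.1) :
    IsSecStr (n - j) (unshiftArcs j A) := by
  refine ⟨?_, ?_, ?_⟩ <;>
    simp only [_root_.unshiftArcs, forall_mem_image, Prod.map_fst, Prod.map_snd]
  · intro p hp; have := hA.1 p hp; have := hj p hp; omega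
  · intro p hp q hq hpq
    have := hA.2.1 p hp q hq (fun h => hpq (h ▸ rfl))
    have := hA.1 p hp; have := hj p hp; have := hA.1 q hq; have := hj q hq; omega
  · intro p hp q hq
    have := hA.2.2 p hp q hq
    have := hA.1 p hp; have := hj p hp; have := hA.1 q hq; have := hj q hq; omega

end Shift

theorem IsSecStr.eq_insert_filter_union {n i : ℕ} {A : Finset (ℕ × ℕ)} (hA : IsSecStr n A)
    (hi : (i, n) ∈ A) : A = insert (i, n) (A.filter (·.2 < i) ∪ A.filter (i < ·.1)) := by
  ext p
  simp only [Finset.mem_insert, mem_union, mem_filter]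
  refine ⟨fun hp => ?_, by rintro (rfl | ⟨hp, -⟩ | ⟨hp, -⟩) <;> assumption⟩
  by_cases hpi : p = (i, n)
  · exact .inl hpi
  · have := hA.1 p hp
    have := hA.disjoint_or_nested hp hi hpi
    dsimp only at this
    simp only [hp, true_and]
    omega

theorem isSecStr_insert_union_shiftArcs {k m : ℕ} {L R : Finset (ℕ × ℕ)} (hL : IsSecStr k L)
    (hR : IsSecStr m R) (hm : m ≠ 0) :
    IsSecStr (k + m + 2) (insert (k + 1, k + m + 2) (L ∪ shiftArcs (k + 1) R)) := by
  have hRbound : ∀ q ∈ shiftArcs (k + 1) R, k + 1 < q.1 ∧ q.2 ≤ m + (k + 1) := fun q hq =>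
    ⟨hR.lt_fst_of_mem_shiftArcs hq, (hR.shiftArcs.1 q hq).2.2.1⟩
  refine ((hL.mono (by omega)).union (hR.shiftArcs.mono (by omega)) fun p hp q hq => ?_).insert_arc
    (by omega) (by omega) le_rfl fun p hp => ?_
  · have := hL.1 p hp
    have := hRbound q hq
    omega
  · rcases mem_union.1 hp with hp | hp
    · have := hL.1 p hp
      omega
    · have := hRbound p hp
      omega

theorem IsSecStr.split_of_mem {k m : ℕ} {A : Finset (ℕ × ℕ)} (hA : IsSecStr (k + m + 2) A)
    (hc : (k + 1, k + m + 2) ∈ A) :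
    IsSecStr k (A.filter (·.2 < k + 1)) ∧
      IsSecStr m (_root_.unshiftArcs (k + 1) (A.filter (k + 1 < ·.1))) := by
  have hinside : IsSecStr (k + m + 1) (A.filter (k + 1 < ·.1)) := by
    refine hA.of_subset (filter_subset _ _) fun p hp => ?_
    obtain ⟨hp, hkp⟩ := mem_filter.1 hp
    have := hA.1 p hp
    have := hA.disjoint_or_nested hp hc (by rintro rfl; omega)
    dsimp only at this
    omega
  refine ⟨hA.of_subset (filter_subset _ _) fun p hp => ?_, ?_⟩
  · have := (mem_filter.1 hp).2
    omega
  · simpa using hinside.unshiftArcs (j := k + 1) fun p hp => (mem_filter.1 hp).2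

theorem split_insert_union_shiftArcs {k m : ℕ} {L R : Finset (ℕ × ℕ)} (hL : IsSecStr k L)
    (hR : IsSecStr m R) :
    let A := insert (k + 1, k + m + 2) (L ∪ shiftArcs (k + 1) R)
    (A.filter (·.2 < k + 1), unshiftArcs (k + 1) (A.filter (k + 1 < ·.1))) = (L, R) := by
  have hRbound : ∀ q ∈ shiftArcs (k + 1) R, k + 1 < q.1 ∧ q.1 < q.2 := fun q hq =>
    ⟨hR.lt_fst_of_mem_shiftArcs hq, (hR.shiftArcs.1 q hq).2.1⟩
  dsimp only
  rw [filter_insert, if_neg (by omega), filter_union, filter_true_of_mem, filter_false_of_mem,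
    union_empty, filter_insert, if_neg (by omega), filter_union, filter_false_of_mem,
    filter_true_of_mem fun q hq => (hRbound q hq).1, empty_union, unshiftArcs_shiftArcs]
  · intro p hp; have := hL.1 p hp; omega
  · intro p hp; have := hRbound p hp; omega
  · intro p hp; have := hL.1 p hp; omega

open Classical in
noncomputable def secStrs (n : ℕ) : Finset (Finset (ℕ × ℕ)) :=
  ((range (n + 1) ×ˢ range (n + 1)).powerset).filter (IsSecStr n)

theorem mem_secStrs {n : ℕ} {A : Finset (ℕ × ℕ)} : A ∈ secStrs n ↔ IsSecStr n A := by
  classical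
  refine mem_filter.trans (and_iff_right_of_imp fun hA => mem_powerset.2 fun p hp => ?_)
  have := hA.1 p hp
  simp only [mem_product, mem_range]
  omega

theorem secCount_eq_card (n : ℕ) : secCount n = #(secStrs n) := by
  rw [secCount, ← Nat.card_eq_finsetCard]
  exact Nat.card_congr (Equiv.subtypeEquivRight fun _ => mem_secStrs.symm)

theorem card_filter_mem_secStrs (k m : ℕ) (hm : m ≠ 0) :
    #((secStrs (k + m + 2)).filter ((k + 1, k + m + 2) ∈ ·)) = secCount k * secCount m := by
  rw [secCount_eq_card, secCount_eq_card, ← card_product]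
  refine card_nbij'
    (fun A => (A.filter (·.2 < k + 1), unshiftArcs (k + 1) (A.filter (k + 1 < ·.1))))
    (fun P => insert (k + 1, k + m + 2) (P.1 ∪ shiftArcs (k + 1) P.2)) ?_ ?_ ?_ ?_
  · intro A hA
    rw [mem_coe, mem_filter, mem_secStrs] at hA
    obtain ⟨hleft, hright⟩ := hA.1.split_of_mem hA.2
    exact mem_coe.2 (mem_product.2 ⟨mem_secStrs.2 hleft, mem_secStrs.2 hright⟩)
  · intro P hP
    rw [mem_coe, mem_product, mem_secStrs, mem_secStrs] at hP
    rw [mem_coe, mem_filter, mem_secStrs]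
    exact ⟨isSecStr_insert_union_shiftArcs hP.1 hP.2 hm, mem_insert_self _ _⟩
  · intro A hA
    rw [mem_coe, mem_filter, mem_secStrs] at hA
    dsimp only
    rw [shiftArcs_unshiftArcs fun p hp => ?_]
    · exact (hA.1.eq_insert_filter_union hA.2).symm
    · have := (mem_filter.1 hp).2
      have := hA.1.1 p (mem_filter.1 hp).1
      omega
  · rintro ⟨L, R⟩ hP
    rw [mem_coe, mem_product, mem_secStrs, mem_secStrs] at hP
    exact split_insert_union_shiftArcs hP.1 hP.2

theorem filter_unpaired_secStrs (n : ℕ) :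
    (secStrs (n + 1)).filter (fun A => ∀ p ∈ A, p.2 ≠ n + 1) = secStrs n := by
  ext A
  simp only [mem_filter, mem_secStrs]
  refine ⟨fun ⟨hA, hn⟩ => hA.of_subset subset_rfl fun p hp => ?_, fun hA => ⟨hA.mono n.le_succ,
    fun p hp => by have := hA.1 p hp; omega⟩⟩
  have := hA.1 p hp
  have := hn p hp
  omega

theorem filter_paired_secStrs (n : ℕ) :
    (secStrs (n + 1)).filter (fun A => ¬ ∀ p ∈ A, p.2 ≠ n + 1) =
      (range (n - 1)).biUnion fun k => (secStrs (n + 1)).filter ((k + 1, n + 1) ∈ ·) := by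
  ext A
  simp only [mem_filter, mem_biUnion, mem_range, mem_secStrs, not_forall, not_not]
  constructor
  · rintro ⟨hA, p, hp, hpn⟩
    have := hA.1 p hp
    refine ⟨p.1 - 1, by omega, hA, ?_⟩
    rwa [show (p.1 - 1 + 1, n + 1) = p by ext <;> simp <;> omega]
  · rintro ⟨k, -, hA, hk⟩
    exact ⟨hA, _, hk, rfl⟩

theorem secCount_succ (n : ℕ) :
    secCount (n + 1) = secCount n + ∑ k ∈ range (n - 1), secCount k * secCount (n - 1 - k) := by
  have hdisj : (range (n - 1) : Set ℕ).PairwiseDisjoint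
      fun k => (secStrs (n + 1)).filter ((k + 1, n + 1) ∈ ·) := by
    intro k _ l _ hkl
    refine disjoint_left.2 fun A hk hl => hkl ?_
    rw [mem_filter, mem_secStrs] at hk hl
    by_contra hne
    have := hk.1.2.1 _ hk.2 _ hl.2 (by simpa using hne)
    omega
  rw [secCount_eq_card, ← card_filter_add_card_filter_not (fun A => ∀ p ∈ A, p.2 ≠ n + 1),
    filter_unpaired_secStrs, filter_paired_secStrs, card_biUnion hdisj, secCount_eq_card]
  refine congrArg _ (sum_congr rfl fun k hk => ?_)
  have := card_filter_mem_secStrs k (n - 1 - k) (by simp at hk; omega)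
  rwa [show k + (n - 1 - k) + 2 = n + 1 by simp at hk; omega] at this

theorem secCount_zero : secCount 0 = 1 := by
  rw [secCount_eq_card, card_eq_one]
  refine ⟨∅, eq_singleton_iff_unique_mem.2
    ⟨mem_secStrs.2 ⟨by simp, by simp, by simp⟩, fun A hA => ?_⟩⟩
  refine eq_empty_of_forall_notMem fun p hp => ?_
  have := (mem_secStrs.1 hA).1 p hp
  omega

section ClosedForm

variable {z x : ℝ}

theorem sq_sub_three_mul_add_one_pos (hρ : z < rho) : 0 < z ^ 2 - 3 * z + 1 := by
  have h5 : Real.sqrt 5 ^ 2 = 5 := Real.sq_sqrt (by norm_num)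
  have h5' : 0 ≤ Real.sqrt 5 := Real.sqrt_nonneg 5
  rw [rho] at hρ
  nlinarith

theorem discr_pos (hρ : z < rho) : 0 < (z ^ 2 + z + 1) * (z ^ 2 - 3 * z + 1) :=
  mul_pos (by nlinarith [sq_nonneg (z + 1 / 2)]) (sq_sub_three_mul_add_one_pos hρ)

theorem two_mul_sq_mul_Sfun (hz : z ≠ 0) :
    2 * z ^ 2 * Sfun z = 1 - z + z ^ 2 - Real.sqrt ((z ^ 2 + z + 1) * (z ^ 2 - 3 * z + 1)) := by
  rw [Sfun]
  field_simp

theorem Sfun_quadratic (hz : z ≠ 0) (hρ : z < rho) :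
    z ^ 2 * Sfun z ^ 2 - (1 - z + z ^ 2) * Sfun z + 1 = 0 := by
  have h := two_mul_sq_mul_Sfun hz
  have hsq := Real.sq_sqrt (discr_pos hρ).le
  have h4 : (4 : ℝ) * z ^ 2 ≠ 0 := by positivity
  refine (mul_eq_zero.1 ?_).resolve_left h4
  linear_combination (2 * z ^ 2 * Sfun z - (1 - z + z ^ 2)
    - Real.sqrt ((z ^ 2 + z + 1) * (z ^ 2 - 3 * z + 1))) * h + hsq

theorem one_le_Sfun (hz : 0 < z) (hρ : z < rho) : 1 ≤ Sfun z := by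
  have h := two_mul_sq_mul_Sfun hz.ne'
  have hsq := Real.sq_sqrt (discr_pos hρ).le
  have h5 : Real.sqrt 5 ^ 2 = 5 := Real.sq_sqrt (by norm_num)
  have hz2 : z < 1 / 2 := by rw [rho] at hρ; nlinarith [Real.sqrt_nonneg 5]
  -- the discriminant equals `(1 - z - z²)² - 4z³`
  have hlt : Real.sqrt ((z ^ 2 + z + 1) * (z ^ 2 - 3 * z + 1)) < 1 - z - z ^ 2 :=
    (Real.sqrt_lt' (by nlinarith)).2 (by nlinarith [pow_pos hz 3])
  nlinarith [pow_pos hz 2]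

theorem eq_Sfun_of_le (hz : z ≠ 0) (hρ : z < rho)
    (hx : z ^ 2 * x ^ 2 - (1 - z + z ^ 2) * x + 1 = 0) (hle : x ≤ Sfun z) : x = Sfun z := by
  have h := two_mul_sq_mul_Sfun hz
  have hroot : (x - Sfun z) * (z ^ 2 * (x + Sfun z) - (1 - z + z ^ 2)) = 0 := by
    linear_combination hx - Sfun_quadratic hz hρ
  refine sub_eq_zero.1 ((mul_eq_zero.1 hroot).resolve_right fun h' => ?_)
  nlinarith [Real.sqrt_pos.2 (discr_pos hρ), mul_le_mul_of_nonneg_left hle (sq_nonneg z)]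

end ClosedForm

def pairedSum (a : ℕ → ℝ) (m : ℕ) : ℝ :=
  ∑ k ∈ range (m - 1), a k * a (m - 1 - k)

section Recursion

variable {a : ℕ → ℝ} {z S : ℝ}

theorem pairedSum_mul_pow (s : ℕ → ℝ) (z : ℝ) (m : ℕ) :
    z ^ 2 * pairedSum (fun n => s n * z ^ n) m = pairedSum s m * z ^ (m + 1) := by
  simp only [pairedSum, mul_sum, sum_mul]
  refine sum_congr rfl fun k hk => ?_
  rw [show m + 1 = 2 + k + (m - 1 - k) by simp at hk; omega, pow_add, pow_add]
  ring

theorem sum_range_pairedSum_le (ha : ∀ n, 0 ≤ a n) (N : ℕ) :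
    ∑ m ∈ range N, pairedSum a m ≤ (∑ k ∈ range N, a k) * (∑ k ∈ range N, a k - a 0) := by
  cases N with
  | zero => simp
  | succ N =>
    rw [show ∑ k ∈ range (N + 1), a k - a 0 = ∑ k ∈ range N, a (k + 1) by
      rw [sum_range_succ']; ring, sum_mul]
    simp only [pairedSum]
    rw [sum_comm' (t' := range (N + 1)) (s' := fun k => Ico (k + 2) (N + 1))
      (fun m k => by simp only [mem_range, mem_Ico]; omega)]
    refine sum_le_sum fun k _ => ?_
    rw [← mul_sum]
    refine mul_le_mul_of_nonneg_left ?_ (ha k)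
    rw [sum_Ico_eq_sum_range]
    calc ∑ i ∈ range (N + 1 - (k + 2)), a (k + 2 + i - 1 - k)
        = ∑ i ∈ range (N + 1 - (k + 2)), a (i + 1) :=
          sum_congr rfl fun i _ => by rw [show k + 2 + i - 1 - k = i + 1 by omega]
      _ ≤ ∑ i ∈ range N, a (i + 1) :=
          sum_le_sum_of_subset_of_nonneg (range_subset_range.2 (by omega)) fun i _ _ => ha _

theorem hasSum_pairedSum (ha : ∀ n, 0 ≤ a n) (hsum : Summable a) :
    HasSum (pairedSum a) ((∑' n, a n) * (∑' n, a n - a 0)) := by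
  have hnorm : Summable fun n => ‖a n‖ := by simpa only [Real.norm_of_nonneg (ha _)] using hsum
  have hcauchy := hasSum_sum_range_mul_of_summable_norm hnorm ((summable_nat_add_iff 1).2 hnorm)
  have hshift :
      (fun n => pairedSum a (n + 2)) = fun n => ∑ k ∈ range (n + 1), a k * a (n - k + 1) :=
    funext fun n => sum_congr rfl fun k hk => by
      rw [show n + 2 - 1 - k = n - k + 1 by simp at hk; omega]
  have hT : ∑' n, a n - a 0 = ∑' n, a (n + 1) := by rw [hsum.tsum_eq_zero_add]; ring
  rw [hT, ← hasSum_nat_add_iff' 2, show ∑ i ∈ range 2, pairedSum a i = 0 by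
    simp [pairedSum, sum_range_succ], sub_zero, hshift]
  exact hcauchy

variable (ha : ∀ n, 0 ≤ a n) (h0 : a 0 = 1)
  (hrec : ∀ m, a (m + 1) = z * a m + z ^ 2 * pairedSum a m)
include ha h0 hrec

theorem sum_range_le_of_rec (hz : 0 ≤ z) (hS1 : 1 ≤ S)
    (hS : 1 + z * S + z ^ 2 * (S * (S - 1)) ≤ S) (N : ℕ) : ∑ n ∈ range N, a n ≤ S := by
  induction N with
  | zero => simpa using zero_le_one.trans hS1
  | succ N ih =>
    set P := ∑ n ∈ range N, a n
    have hP : 0 ≤ P := sum_nonneg fun n _ => ha n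
    have hPS : P * (P - 1) ≤ S * (S - 1) := by nlinarith
    calc ∑ n ∈ range (N + 1), a n = 1 + z * P + z ^ 2 * ∑ m ∈ range N, pairedSum a m := by
          rw [sum_range_succ', h0, sum_congr rfl fun m _ => hrec m, sum_add_distrib, ← mul_sum,
            ← mul_sum]
          ring
      _ ≤ 1 + z * P + z ^ 2 * (P * (P - 1)) := by
          gcongr
          simpa [h0] using sum_range_pairedSum_le ha N
      _ ≤ 1 + z * S + z ^ 2 * (S * (S - 1)) := by gcongr
      _ ≤ S := hS

theorem tsum_eq_Sfun_of_rec (hz : 0 < z) (hρ : z < rho) : ∑' n, a n = Sfun z := by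
  have hS := Sfun_quadratic hz.ne' hρ
  have hbound := sum_range_le_of_rec ha h0 hrec hz.le (one_le_Sfun hz hρ)
    (by linear_combination hS)
  have hsum : Summable a := summable_of_sum_range_le ha hbound
  set T := ∑' n, a n
  have htail : HasSum (fun m => a (m + 1)) (T - 1) := by
    simpa [h0] using (hasSum_nat_add_iff' 1).2 hsum.hasSum
  have hrhs : HasSum (fun m => a (m + 1)) (z * T + z ^ 2 * (T * (T - 1))) := by
    simp only [hrec]
    simpa [h0] using (hsum.hasSum.mul_left z).add ((hasSum_pairedSum ha hsum).mul_left (z ^ 2))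
  refine eq_Sfun_of_le hz.ne' hρ ?_ (hsum.tsum_le_of_sum_range_le hbound)
  linear_combination -htail.unique hrhs

end Recursion

theorem tsum_mul_pow_eq_Sfun {s : ℕ → ℝ} {z : ℝ} (hs : ∀ n, 0 ≤ s n) (h0 : s 0 = 1)
    (hrec : ∀ n, s (n + 1) = s n + pairedSum s n) (hz : 0 < z) (hρ : z < rho) :
    ∑' n, s n * z ^ n = Sfun z :=
  tsum_eq_Sfun_of_rec (fun n => mul_nonneg (hs n) (pow_nonneg hz.le n)) (by simp [h0])
    (fun m => by rw [pairedSum_mul_pow, hrec]; ring) hz hρ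

/-- Closed form and algebraic equation for the generating function of
RNA secondary structures: `S(z) = (1 − z + z² − √((z²+z+1)(z²−3z+1)))/(2z²)`,
`z²S² − (1−z+z²)S + 1 = 0`, with `S(0) = s(0) = 1`. -/
theorem secStr_gf_closed_form :
    (∀ z : ℝ, 0 < z → z < rho →
      (∑' n : ℕ, (secCount n : ℝ) * z ^ n = Sfun z ∧
       z ^ 2 * (Sfun z) ^ 2 - (1 - z + z ^ 2) * Sfun z + 1 = 0)) ∧
    secCount 0 = 1 := by
  refine ⟨fun z hz hρ => ⟨tsum_mul_pow_eq_Sfun (fun n => Nat.cast_nonneg _)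
    (by exact_mod_cast secCount_zero) (fun n => ?_) hz hρ, Sfun_quadratic hz.ne' hρ⟩, secCount_zero⟩
  simp only [pairedSum]
  exact_mod_cast secCount_succ n
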